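/- The derivative of the soft-thresholding risk at τ = 0 satisfies ∂r(τ; G)/∂τ |_{τ=0} = −4·E_μ[φ(μ)] = −4·E_μ[e^{−μ²/2}/√(2π)], and in particular this derivative is strictly negative. -/

import Mathlib

open MeasureTheory

/-- Standard Gaussian density `φ(z) = e^{-z²/2}/√(2π)`. -/
noncomputable def gaussPDF (z : ℝ) : ℝ := Real.exp (-z ^ 2 / 2) / Real.sqrt (2 * Real.pi)

/-- Soft-thresholding function `η(x; τ) = sign(x)·max(|x| − τ, 0)`. -/
noncomputable def softThr (x τ : ℝ) : ℝ := Real.sign x * max (|x| - τ) 0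

/-- Soft-thresholding risk `r(τ; G) = E_{μ∼G, Z∼N(0,1)}[(η(μ + Z; τ) − μ)²]`. -/
noncomputable def stRisk (G : Measure ℝ) (τ : ℝ) : ℝ :=
  ∫ m, (∫ z, (softThr (m + z) τ - m) ^ 2 * gaussPDF z) ∂G

/-!
For `τ ≤ 0` soft thresholding is `x ↦ x - τ·sign x` everywhere, and the Gaussian identities
`E[Z²] = 1`, `E[Z·sign(m + Z)] = 2φ(m)` give the risk at a point mass exactly:
`r(τ; δ_m) = 1 - 4τφ(m) + τ²`. For `0 ≤ τ ≤ 1` the two estimators differ only when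
`|m + Z| ≤ τ`, an interval of length `2τ` on which the loss difference times the density is at
most `4τ(1 + |z|)φ(z) ≤ 4τ`; so the same formula holds up to `8τ²`, uniformly in `m`.
Integrating over `G`, `r(τ; G) = 1 - 4τ·E[φ(μ)] + O(τ²)` near `0`.
-/

open Real Set Filter Topology ProbabilityTheory

theorem HasDerivAt.of_isBigO_sub_sq {𝕜 F : Type*} [NontriviallyNormedField 𝕜]
    [NormedAddCommGroup F] [NormedSpace 𝕜 F] {f g : 𝕜 → F} {g' : F} {a : 𝕜}
    (hg : HasDerivAt g g' a) (hfg : (fun x => f x - g x) =O[𝓝 a] fun x => ‖x - a‖ ^ 2) :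
    HasDerivAt f g' a := by
  have ha : f a - g a = 0 := hfg.eq_zero_imp.self_of_nhds (by simp)
  have h0 : HasDerivAt (fun x => f x - g x) 0 a := by
    rw [hasDerivAt_iff_isLittleO]
    simpa [ha] using hfg.trans_isLittleO (Asymptotics.isLittleO_pow_sub_sub a one_lt_two)
  simpa using h0.fun_add hg

section Gaussian

lemma gaussPDF_eq_gaussianPDFReal : gaussPDF = gaussianPDFReal 0 1 := by
  ext z; simp [gaussPDF, gaussianPDFReal, div_eq_inv_mul]

@[fun_prop]
lemma measurable_gaussPDF : Measurable gaussPDF := by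
  unfold gaussPDF; fun_prop

lemma gaussPDF_pos (z : ℝ) : 0 < gaussPDF z := by
  unfold gaussPDF; positivity

lemma gaussPDF_neg (z : ℝ) : gaussPDF (-z) = gaussPDF z := by
  simp [gaussPDF]

lemma one_add_abs_mul_gaussPDF_le_one (z : ℝ) : (1 + |z|) * gaussPDF z ≤ 1 := by
  have hexp : 1 + |z| ≤ 2 * exp (z ^ 2 / 2) := by
    nlinarith [add_one_le_exp (z ^ 2 / 2), sq_abs z, sq_nonneg (|z| - 1)]
  have hsqrt : 2 ≤ √(2 * π) := by
    rw [Real.le_sqrt (by norm_num) (by positivity)]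
    nlinarith [pi_gt_three]
  rw [gaussPDF, mul_div_assoc', div_le_one (by positivity), neg_div, exp_neg]
  calc (1 + |z|) * (exp (z ^ 2 / 2))⁻¹ ≤ 2 * exp (z ^ 2 / 2) * (exp (z ^ 2 / 2))⁻¹ := by gcongr
    _ = 2 := by field_simp
    _ ≤ √(2 * π) := hsqrt

lemma gaussPDF_le_one (z : ℝ) : gaussPDF z ≤ 1 :=
  (le_mul_of_one_le_left (gaussPDF_pos z).le (by simp)).trans (one_add_abs_mul_gaussPDF_le_one z)

lemma hasDerivAt_gaussPDF (z : ℝ) : HasDerivAt gaussPDF (-z * gaussPDF z) z := by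
  have h : HasDerivAt (fun x : ℝ => -x ^ 2 / 2) (-z) z := by
    simpa [neg_div] using ((hasDerivAt_pow 2 z).div_const 2).fun_neg
  exact (h.exp.div_const (√(2 * π))).congr_deriv (by rw [gaussPDF]; ring)

lemma tendsto_gaussPDF_atTop : Tendsto gaussPDF atTop (𝓝 0) := by
  have h : Tendsto (fun z : ℝ => -z ^ 2 / 2) atTop atBot :=
    (tendsto_neg_atTop_atBot.comp (tendsto_pow_atTop two_ne_zero)).atBot_div_const two_pos
  exact zero_div (√(2 * π)) ▸ (tendsto_exp_atBot.comp h).div_const _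

lemma integrable_gaussPDF : Integrable gaussPDF :=
  gaussPDF_eq_gaussianPDFReal ▸ integrable_gaussianPDFReal 0 1

lemma integrable_gaussPDF_of_isFiniteMeasure (G : Measure ℝ) [IsFiniteMeasure G] :
    Integrable gaussPDF G :=
  .of_bound measurable_gaussPDF.aestronglyMeasurable 1 <| ae_of_all _ fun m => by
    rw [Real.norm_of_nonneg (gaussPDF_pos m).le]; exact gaussPDF_le_one m

lemma integral_gaussPDF_pos (G : Measure ℝ) [IsFiniteMeasure G] [NeZero G] :
    0 < ∫ m, gaussPDF m ∂G := by
  rw [integral_pos_iff_support_of_nonneg (fun m => (gaussPDF_pos m).le)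
    (integrable_gaussPDF_of_isFiniteMeasure G)]
  simp [Function.support, (gaussPDF_pos _).ne', NeZero.ne G]

lemma integrable_pow_mul_gaussPDF (n : ℕ) : Integrable fun z => z ^ n * gaussPDF z := by
  have h := (integrable_rpow_mul_exp_neg_mul_sq (b := 1 / 2) (by norm_num)
    (s := n) (by linarith [n.cast_nonneg (α := ℝ)])).div_const (√(2 * π))
  refine h.congr (ae_of_all _ fun z => ?_)
  simp only [rpow_natCast, gaussPDF]
  ring_nf

lemma integrable_id_mul_gaussPDF : Integrable fun z => z * gaussPDF z := by
  simpa using integrable_pow_mul_gaussPDF 1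

lemma integral_mul_gaussPDF (f : ℝ → ℝ) :
    ∫ z, f z * gaussPDF z = ∫ z, f z ∂gaussianReal 0 1 := by
  simp [integral_gaussianReal_eq_integral_smul, gaussPDF_eq_gaussianPDFReal, mul_comm]

lemma integral_gaussPDF : ∫ z, gaussPDF z = 1 :=
  gaussPDF_eq_gaussianPDFReal ▸ integral_gaussianPDFReal_eq_one 0 one_ne_zero

lemma integral_id_mul_gaussPDF : ∫ z, z * gaussPDF z = 0 := by
  simpa using integral_mul_gaussPDF id

lemma integral_sq_mul_gaussPDF : ∫ z, z ^ 2 * gaussPDF z = 1 := by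
  have h := variance_eq_integral (μ := gaussianReal 0 1) measurable_id.aemeasurable
  simp only [variance_id_gaussianReal, id, integral_id_gaussianReal, sub_zero] at h
  rw [integral_mul_gaussPDF (· ^ 2)]
  exact_mod_cast h.symm

lemma integral_Ioi_id_mul_gaussPDF (a : ℝ) : ∫ z in Ioi a, z * gaussPDF z = gaussPDF a := by
  simpa using integral_Ioi_of_hasDerivAt_of_tendsto' (f := fun z => -gaussPDF z) (m := 0)
    (fun z _ => (hasDerivAt_gaussPDF z).neg.congr_deriv (by ring))
    integrable_id_mul_gaussPDF.integrableOn
    (by simpa using tendsto_gaussPDF_atTop.neg)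

lemma mul_sign_mul_gaussPDF_ae_eq (m : ℝ) : (fun z => z * sign (m + z) * gaussPDF z) =ᵐ[volume]
    fun z => 2 * (Ioi (-m)).indicator (fun z => z * gaussPDF z) z - z * gaussPDF z := by
  filter_upwards [volume.ae_ne (-m)] with z hz
  rcases hz.lt_or_gt with h | h
  · rw [sign_of_neg (by linarith), indicator_of_notMem (by simpa using h.le)]; ring
  · rw [sign_of_pos (by linarith), indicator_of_mem (mem_Ioi.2 h)]; ring

lemma integrable_mul_sign_mul_gaussPDF (m : ℝ) :
    Integrable fun z => z * sign (m + z) * gaussPDF z :=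
  (((integrable_id_mul_gaussPDF.indicator measurableSet_Ioi).const_mul 2).sub
    integrable_id_mul_gaussPDF).congr (mul_sign_mul_gaussPDF_ae_eq m).symm

lemma integral_mul_sign_mul_gaussPDF (m : ℝ) :
    ∫ z, z * sign (m + z) * gaussPDF z = 2 * gaussPDF m := by
  rw [integral_congr_ae (mul_sign_mul_gaussPDF_ae_eq m),
    integral_sub ((integrable_id_mul_gaussPDF.indicator measurableSet_Ioi).const_mul 2)
      integrable_id_mul_gaussPDF,
    integral_const_mul, integral_indicator measurableSet_Ioi, integral_Ioi_id_mul_gaussPDF,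
    gaussPDF_neg, integral_id_mul_gaussPDF, sub_zero]

end Gaussian

section Loss

@[fun_prop]
lemma Real.measurable_sign : Measurable Real.sign :=
  Measurable.ite measurableSet_Iio measurable_const
    (Measurable.ite measurableSet_Ioi measurable_const measurable_const)

@[fun_prop]
lemma measurable_softThr : Measurable fun p : ℝ × ℝ => softThr p.1 p.2 := by
  unfold softThr; fun_prop

lemma softThr_of_le_abs {x τ : ℝ} (h : τ ≤ |x|) : softThr x τ = x - τ * sign x := by
  rw [softThr, max_eq_left (by linarith)]
  rcases lt_trichotomy x 0 with hx | rfl | hx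
  · rw [sign_of_neg hx, abs_of_neg hx]; ring
  · simp
  · rw [sign_of_pos hx, abs_of_pos hx]; ring

lemma softThr_of_abs_le {x τ : ℝ} (h : |x| ≤ τ) : softThr x τ = 0 := by
  rw [softThr, max_eq_right (by linarith), mul_zero]

/-- Off `z = -m` this is `(z - τ * sign (m + z)) ^ 2`, the loss of the estimator
`x ↦ x - τ * sign x`, which is what soft thresholding is away from `[-τ, τ]`. -/
noncomputable def shiftLoss (m τ z : ℝ) : ℝ := z ^ 2 - 2 * τ * (z * sign (m + z)) + τ ^ 2

lemma sq_softThr_sub_eq_shiftLoss {m τ z : ℝ} (hτ : τ ≤ |m + z|) (hz : m + z ≠ 0) :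
    (softThr (m + z) τ - m) ^ 2 = shiftLoss m τ z := by
  have hsign : sign (m + z) ^ 2 = 1 := by
    rcases sign_apply_eq_of_ne_zero _ hz with h | h <;> simp [h]
  rw [softThr_of_le_abs hτ, shiftLoss]
  linear_combination τ ^ 2 * hsign

lemma abs_sq_softThr_sub_sub_shiftLoss_le {m τ z : ℝ} (hz : |m + z| ≤ τ) (hτ : τ ≤ 1) :
    |(softThr (m + z) τ - m) ^ 2 - shiftLoss m τ z| ≤ 4 * τ * (1 + |z|) := by
  have hτ₀ : 0 ≤ τ := (abs_nonneg _).trans hz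
  have hsign : |sign (m + z)| ≤ 1 := by
    rcases sign_apply_eq (m + z) with h | h | h <;> simp [h]
  have hmz : |m - z| ≤ τ + 2 * |z| := by
    calc |m - z| = |(m + z) - 2 * z| := by ring_nf
      _ ≤ |m + z| + |2 * z| := abs_sub _ _
      _ ≤ τ + 2 * |z| := by rw [abs_mul, abs_two]; linarith
  have hprod : |(m - z) * (m + z)| ≤ (τ + 2 * |z|) * τ := by
    rw [abs_mul]; exact mul_le_mul hmz hz (abs_nonneg _) (by positivity)
  have hcross : |2 * τ * (z * sign (m + z))| ≤ 2 * τ * |z| := by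
    rw [abs_mul, abs_mul, abs_mul, abs_two, abs_of_nonneg hτ₀]
    gcongr
    exact mul_le_of_le_one_right (abs_nonneg z) hsign
  rw [softThr_of_abs_le hz, shiftLoss,
    show (0 - m) ^ 2 - (z ^ 2 - 2 * τ * (z * sign (m + z)) + τ ^ 2)
      = (m - z) * (m + z) + 2 * τ * (z * sign (m + z)) - τ ^ 2 by ring]
  calc |(m - z) * (m + z) + 2 * τ * (z * sign (m + z)) - τ ^ 2|
      ≤ |(m - z) * (m + z)| + |2 * τ * (z * sign (m + z))| + τ ^ 2 := by
        refine (abs_sub _ _).trans ?_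
        rw [abs_of_nonneg (sq_nonneg τ)]
        linarith [abs_add_le ((m - z) * (m + z)) (2 * τ * (z * sign (m + z)))]
    _ ≤ (τ + 2 * |z|) * τ + 2 * τ * |z| + τ ^ 2 := by linarith
    _ ≤ 4 * τ * (1 + |z|) := by nlinarith [mul_le_mul_of_nonneg_left hτ hτ₀]

lemma shiftLoss_mul_gaussPDF (m τ z : ℝ) : shiftLoss m τ z * gaussPDF z =
    z ^ 2 * gaussPDF z - 2 * τ * (z * sign (m + z) * gaussPDF z) + τ ^ 2 * gaussPDF z := by
  rw [shiftLoss]; ring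

lemma integrable_shiftLoss_mul_gaussPDF (m τ : ℝ) :
    Integrable fun z => shiftLoss m τ z * gaussPDF z := by
  simp_rw [shiftLoss_mul_gaussPDF]
  exact ((integrable_pow_mul_gaussPDF 2).sub ((integrable_mul_sign_mul_gaussPDF m).const_mul _)).add
    (integrable_gaussPDF.const_mul _)

lemma integral_shiftLoss_mul_gaussPDF (m τ : ℝ) :
    ∫ z, shiftLoss m τ z * gaussPDF z = 1 - 4 * τ * gaussPDF m + τ ^ 2 := by
  have hcross : Integrable fun z => 2 * τ * (z * sign (m + z) * gaussPDF z) :=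
    (integrable_mul_sign_mul_gaussPDF m).const_mul _
  have hfirst : Integrable fun z => z ^ 2 * gaussPDF z - 2 * τ * (z * sign (m + z) * gaussPDF z) :=
    (integrable_pow_mul_gaussPDF 2).sub hcross
  simp_rw [shiftLoss_mul_gaussPDF]
  rw [integral_add hfirst (integrable_gaussPDF.const_mul _),
    integral_sub (integrable_pow_mul_gaussPDF 2) hcross, integral_const_mul, integral_const_mul,
    integral_sq_mul_gaussPDF, integral_mul_sign_mul_gaussPDF, integral_gaussPDF]
  ring

end Loss

section PointMass

noncomputable def stRiskAt (m τ : ℝ) : ℝ := ∫ z, (softThr (m + z) τ - m) ^ 2 * gaussPDF z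

lemma stRisk_eq_integral_stRiskAt (G : Measure ℝ) (τ : ℝ) :
    stRisk G τ = ∫ m, stRiskAt m τ ∂G := rfl

lemma stronglyMeasurable_stRiskAt (τ : ℝ) : StronglyMeasurable fun m => stRiskAt m τ :=
  StronglyMeasurable.integral_prod_right'
    (f := fun p : ℝ × ℝ => (softThr (p.1 + p.2) τ - p.1) ^ 2 * gaussPDF p.2)
    (by fun_prop : Measurable _).stronglyMeasurable

lemma stRiskAt_of_nonpos (m : ℝ) {τ : ℝ} (hτ : τ ≤ 0) :
    stRiskAt m τ = 1 - 4 * τ * gaussPDF m + τ ^ 2 := by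
  rw [stRiskAt, ← integral_shiftLoss_mul_gaussPDF m τ]
  refine integral_congr_ae ?_
  filter_upwards [volume.ae_ne (-m)] with z hz
  rw [sq_softThr_sub_eq_shiftLoss (hτ.trans (abs_nonneg _)) (fun h => hz (by linarith))]

lemma abs_stRiskAt_sub_le (m : ℝ) {τ : ℝ} (hτ₀ : 0 ≤ τ) (hτ₁ : τ ≤ 1) :
    |stRiskAt m τ - (1 - 4 * τ * gaussPDF m + τ ^ 2)| ≤ 8 * τ ^ 2 := by
  set strip := Icc (-m - τ) (-m + τ)
  set gap := fun z => ((softThr (m + z) τ - m) ^ 2 - shiftLoss m τ z) * gaussPDF z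
  have hgap : ∀ z, ‖gap z‖ ≤ strip.indicator (fun _ => 4 * τ) z := by
    intro z
    by_cases hz : z ∈ strip
    · have hmz : |m + z| ≤ τ := abs_le.2 ⟨by linarith [hz.1], by linarith [hz.2]⟩
      rw [indicator_of_mem hz, norm_mul, Real.norm_of_nonneg (gaussPDF_pos z).le]
      calc |(softThr (m + z) τ - m) ^ 2 - shiftLoss m τ z| * gaussPDF z
          ≤ 4 * τ * (1 + |z|) * gaussPDF z :=
            mul_le_mul_of_nonneg_right (abs_sq_softThr_sub_sub_shiftLoss_le hmz hτ₁)
              (gaussPDF_pos z).le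
        _ ≤ 4 * τ := by
            rw [mul_assoc]
            exact mul_le_of_le_one_right (by positivity) (one_add_abs_mul_gaussPDF_le_one z)
    · have hmz : τ < |m + z| := by
        simp only [strip, mem_Icc, not_and_or, not_le] at hz
        rw [lt_abs]; rcases hz with h | h <;> [right; left] <;> linarith
      rw [indicator_of_notMem hz, norm_le_zero_iff]
      simp only [gap]
      rw [sq_softThr_sub_eq_shiftLoss hmz.le (abs_pos.1 (hτ₀.trans_lt hmz)), sub_self, zero_mul]
  have hbound : Integrable (strip.indicator fun _ => 4 * τ) :=
    (integrable_indicator_iff measurableSet_Icc).2 (integrableOn_const measure_Icc_lt_top.ne)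
  have hgap_int : Integrable gap :=
    hbound.mono' (by simp only [gap, shiftLoss]; fun_prop) (ae_of_all _ hgap)
  have hsplit : stRiskAt m τ = (∫ z, shiftLoss m τ z * gaussPDF z) + ∫ z, gap z := by
    rw [← integral_add (integrable_shiftLoss_mul_gaussPDF m τ) hgap_int]
    exact integral_congr_ae (ae_of_all _ fun z => by simp only [gap]; ring)
  rw [hsplit, integral_shiftLoss_mul_gaussPDF, add_sub_cancel_left, ← Real.norm_eq_abs]
  calc ‖∫ z, gap z‖ ≤ ∫ z, strip.indicator (fun _ => 4 * τ) z :=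
        norm_integral_le_of_norm_le hbound (ae_of_all _ hgap)
    _ = 8 * τ ^ 2 := by
        rw [integral_indicator_const _ measurableSet_Icc, Real.volume_real_Icc, smul_eq_mul,
          max_eq_left (by linarith)]
        ring

end PointMass

section ProbabilityMeasure

variable {G : Measure ℝ} [IsProbabilityMeasure G]

lemma integral_one_sub_mul_gaussPDF_add_sq (τ : ℝ) :
    ∫ m, (1 - 4 * τ * gaussPDF m + τ ^ 2) ∂G = 1 - 4 * τ * (∫ m, gaussPDF m ∂G) + τ ^ 2 := by
  have hint := (integrable_gaussPDF_of_isFiniteMeasure G).const_mul (4 * τ)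
  have hlin : Integrable (fun m => 1 - 4 * τ * gaussPDF m) G := (integrable_const 1).sub hint
  rw [integral_add hlin (integrable_const _), integral_sub (integrable_const 1) hint,
    integral_const_mul]
  simp

lemma stRisk_of_nonpos {τ : ℝ} (hτ : τ ≤ 0) :
    stRisk G τ = 1 - 4 * τ * (∫ m, gaussPDF m ∂G) + τ ^ 2 := by
  simp only [stRisk_eq_integral_stRiskAt, stRiskAt_of_nonpos _ hτ]
  exact integral_one_sub_mul_gaussPDF_add_sq τ

lemma abs_stRisk_sub_le {τ : ℝ} (hτ₀ : 0 ≤ τ) (hτ₁ : τ ≤ 1) :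
    |stRisk G τ - (1 - 4 * τ * (∫ m, gaussPDF m ∂G) + τ ^ 2)| ≤ 8 * τ ^ 2 := by
  set gap := fun m => stRiskAt m τ - (1 - 4 * τ * gaussPDF m + τ ^ 2)
  have hgap : ∀ m, ‖gap m‖ ≤ 8 * τ ^ 2 := fun m => abs_stRiskAt_sub_le m hτ₀ hτ₁
  have hbase : Integrable (fun m => 1 - 4 * τ * gaussPDF m + τ ^ 2) G :=
    ((integrable_const 1).sub ((integrable_gaussPDF_of_isFiniteMeasure G).const_mul _)).add
      (integrable_const _)
  have hgap_int : Integrable gap G :=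
    .of_bound ((stronglyMeasurable_stRiskAt τ).aestronglyMeasurable.sub hbase.aestronglyMeasurable)
      _ (ae_of_all _ hgap)
  have hsplit : stRisk G τ = (∫ m, (1 - 4 * τ * gaussPDF m + τ ^ 2) ∂G) + ∫ m, gap m ∂G := by
    rw [stRisk_eq_integral_stRiskAt, ← integral_add hbase hgap_int]
    exact integral_congr_ae (ae_of_all _ fun m => by simp only [gap]; ring)
  rw [hsplit, integral_one_sub_mul_gaussPDF_add_sq, add_sub_cancel_left, ← Real.norm_eq_abs]
  simpa using norm_integral_le_of_norm_le_const (μ := G) (ae_of_all _ hgap)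

lemma abs_stRisk_sub_linear_le {τ : ℝ} (hτ : |τ| ≤ 1) :
    |stRisk G τ - (1 - 4 * τ * ∫ m, gaussPDF m ∂G)| ≤ 9 * τ ^ 2 := by
  rcases le_total τ 0 with hτ₀ | hτ₀
  · rw [stRisk_of_nonpos hτ₀, add_sub_cancel_left, abs_of_nonneg (sq_nonneg τ)]
    linarith [sq_nonneg τ]
  · have := abs_stRisk_sub_le (G := G) hτ₀ ((le_abs_self τ).trans hτ)
    calc |stRisk G τ - (1 - 4 * τ * ∫ m, gaussPDF m ∂G)|
        = |(stRisk G τ - (1 - 4 * τ * (∫ m, gaussPDF m ∂G) + τ ^ 2)) + τ ^ 2| := by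
          congr 1; ring
      _ ≤ 8 * τ ^ 2 + τ ^ 2 := (abs_add_le _ _).trans (by rw [abs_of_nonneg (sq_nonneg τ)]; linarith)
      _ = 9 * τ ^ 2 := by ring

end ProbabilityMeasure

theorem stRisk_deriv_at_zero_general (G : Measure ℝ) [IsProbabilityMeasure G] :
    HasDerivAt (stRisk G) (-4 * ∫ m, gaussPDF m ∂G) 0 ∧
      (-4 * ∫ m, gaussPDF m ∂G) = -4 * ∫ m, Real.exp (-m ^ 2 / 2) / Real.sqrt (2 * Real.pi) ∂G ∧
      (-4 * ∫ m, gaussPDF m ∂G) < 0 := by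
  refine ⟨?_, rfl, by linarith [integral_gaussPDF_pos G]⟩
  have hlin : HasDerivAt (fun τ => 1 - 4 * τ * ∫ m, gaussPDF m ∂G) (-4 * ∫ m, gaussPDF m ∂G) 0 := by
    simpa using (((hasDerivAt_id' (0 : ℝ)).const_mul 4).mul_const (∫ m, gaussPDF m ∂G)).const_sub 1
  refine hlin.of_isBigO_sub_sq (Asymptotics.IsBigO.of_bound 9 ?_)
  filter_upwards [Metric.closedBall_mem_nhds (0 : ℝ) one_pos] with τ hτ
  simpa using abs_stRisk_sub_linear_le (G := G) (by simpa using hτ)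

/-- the derivative of the soft-thresholding risk at `τ = 0` equals
`−4·E_μ[φ(μ)] = −4·E_μ[e^{−μ²/2}/√(2π)]`, and this derivative is strictly negative. -/
theorem stRisk_deriv_at_zero (G : Measure ℝ) [IsProbabilityMeasure G]
    (hG : Integrable (fun m => m ^ 2) G) :
    HasDerivAt (stRisk G) (-4 * ∫ m, gaussPDF m ∂G) 0 ∧
      (-4 * ∫ m, gaussPDF m ∂G) = -4 * ∫ m, Real.exp (-m ^ 2 / 2) / Real.sqrt (2 * Real.pi) ∂G ∧
      (-4 * ∫ m, gaussPDF m ∂G) < 0 :=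
  stRisk_deriv_at_zero_general G
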